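/- Let k ≥ 1 and n ≥ 2k. Then the algebra End_{ℂ[S_n]}(Sym^k V_n) of ℂ[S_n]-module endomorphisms of Sym^k V_n has dimension dim_ℂ End_{ℂ[S_n]}(Sym^k V_n) = bp_k, the number of bipartite partitions of k. -/

import Mathlib

/-!
Endomorphisms of a permutation module `K[X]` are the `G`-invariant `X × X` matrices, so they have
a basis indexed by the orbits of `G` on `X × X`. An `S_n`-orbit of a pair `(s, t)` of size-`k`
multisets is determined by the multiset of nonzero pairs `(count i s, count i t)`, which is a
bipartite partition of `k`; conversely a bipartite partition of `k` has at most `2k` parts, so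
when `2k ≤ n` it can be padded with zeros to `n` parts and so arises from some pair.
-/

open Equiv MulAction

namespace SP

/-- The action of `Perm (Fin n)` on size-`k` multisets over `Fin n`
(the multisets index the monomial basis of `Sym^k V_n`). -/
instance symAction (n k : ℕ) : MulAction (Equiv.Perm (Fin n)) (Sym (Fin n) k) where
  smul σ s := ⟨s.1.map σ, by rw [Multiset.card_map]; exact s.2⟩
  one_smul s := Subtype.ext (by show s.1.map _ = s.1; simp)
  mul_smul σ τ s := Subtype.ext (by
    show s.1.map _ = (s.1.map _).map _
    simp [Multiset.map_map, Function.comp_def])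

/-- `b` is a bipartite partition of `k`: a multiset of pairs of nonnegative integers,
none equal to `(0,0)`, whose first coordinates sum to `k` and whose second coordinates
sum to `k`. -/
def IsBiPar (k : ℕ) (b : Multiset (ℕ × ℕ)) : Prop :=
  (0, 0) ∉ b ∧ (b.map Prod.fst).sum = k ∧ (b.map Prod.snd).sum = k

/-- `bp k` is the number of bipartite partitions of `k`. -/
noncomputable def bp (k : ℕ) : ℕ := Nat.card {b : Multiset (ℕ × ℕ) // IsBiPar k b}

section OrbitalBasis

open Representation

variable {K G X : Type*} [Field K] [Group G] [MulAction G X]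

noncomputable def matrixEntry (φ : IntertwiningMap (ofMulAction K G X) (ofMulAction K G X))
    (x y : X) : K :=
  (φ (MonoidAlgebra.single x 1)).coeff y

theorem matrixEntry_smul_smul (φ : IntertwiningMap (ofMulAction K G X) (ofMulAction K G X))
    (g : G) (x y : X) : matrixEntry φ (g • x) (g • y) = matrixEntry φ x y := by
  rw [matrixEntry, ← ofMulAction_single, φ.isIntertwining, coeff_ofMulAction, inv_smul_smul,
    matrixEntry]

variable (K G X) in
noncomputable def orbitalEntries :
    IntertwiningMap (ofMulAction K G X) (ofMulAction K G X) →ₗ[K]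
      orbitRel.Quotient G (X × X) → K where
  toFun φ := Quotient.lift (fun p => matrixEntry φ p.1 p.2) <| by
    rintro _ ⟨x, y⟩ ⟨g, rfl⟩
    exact matrixEntry_smul_smul φ g x y
  map_add' _ _ := by ext ⟨_⟩; rfl
  map_smul' _ _ := by ext ⟨_⟩; rfl

theorem orbitalEntries_injective : Function.Injective (orbitalEntries K G X) := by
  rw [← LinearMap.ker_eq_bot, LinearMap.ker_eq_bot']
  intro φ hφ
  refine IntertwiningMap.ext <| (MonoidAlgebra.basis X K).ext fun x =>
    MonoidAlgebra.ext <| Finsupp.ext fun y => ?_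
  exact congrFun hφ (Quotient.mk'' (x, y))

variable [Fintype X]

noncomputable def orbitalOperator (F : orbitRel.Quotient G (X × X) → K) :
    IntertwiningMap (ofMulAction K G X) (ofMulAction K G X) where
  toLinearMap := (MonoidAlgebra.basis X K).constr K fun x =>
    MonoidAlgebra.ofCoeff (Finsupp.equivFunOnFinite.symm fun y => F (Quotient.mk'' (x, y)))
  isIntertwining' g := by
    refine (MonoidAlgebra.basis X K).ext fun x => MonoidAlgebra.ext <| Finsupp.ext fun y => ?_
    have hxy : (Quotient.mk'' (g • x, y) : orbitRel.Quotient G (X × X)) =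
        Quotient.mk'' (x, g⁻¹ • y) :=
      Quotient.sound ⟨g, by simp⟩
    rw [LinearMap.comp_apply, LinearMap.comp_apply, MonoidAlgebra.basis_apply, ofMulAction_single,
      ← MonoidAlgebra.basis_apply, ← MonoidAlgebra.basis_apply, Module.Basis.constr_basis,
      Module.Basis.constr_basis, coeff_ofMulAction]
    exact congrArg F hxy

theorem orbitalEntries_orbitalOperator (F : orbitRel.Quotient G (X × X) → K) :
    orbitalEntries K G X (orbitalOperator F) = F := by
  ext ⟨x, y⟩
  show (orbitalOperator F (MonoidAlgebra.single x 1)).coeff y = _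
  rw [← MonoidAlgebra.basis_apply]
  exact congrArg (fun v : MonoidAlgebra K X => v.coeff y) (Module.Basis.constr_basis _ _ _ x)

variable (K G X) in
theorem finrank_intertwiningMap_ofMulAction :
    Module.finrank K (IntertwiningMap (ofMulAction K G X) (ofMulAction K G X)) =
      Nat.card (orbitRel.Quotient G (X × X)) := by
  have := Fintype.ofFinite (orbitRel.Quotient G (X × X))
  rw [(LinearEquiv.ofBijective _ ⟨orbitalEntries_injective,
    fun F => ⟨_, orbitalEntries_orbitalOperator F⟩⟩).finrank_eq,
    Module.finrank_fintype_fun_eq_card, Nat.card_eq_fintype_card]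

end OrbitalBasis

theorem exists_perm_comp_eq_of_map_univ_eq {ι β : Type*} [Fintype ι] [DecidableEq β]
    {f g : ι → β} (h : Finset.univ.val.map f = Finset.univ.val.map g) :
    ∃ σ : Perm ι, f ∘ σ = g := by
  have card_fiber (f : ι → β) (b : β) :
      Fintype.card {i // f i = b} = (Finset.univ.val.map f).count b := by
    simp [Multiset.count_map, Fintype.card_subtype, eq_comm, Finset.card_def]
  have e (b : β) : {i // g i = b} ≃ {i // f i = b} :=
    Fintype.equivOfCardEq (by rw [card_fiber, card_fiber, h])
  exact ⟨Equiv.ofFiberEquiv e, funext (Equiv.ofFiberEquiv_map e)⟩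

theorem exists_map_univ_eq_of_card_eq {β : Type*} {n : ℕ} {m : Multiset β}
    (h : Multiset.card m = n) : ∃ f : Fin n → β, Finset.univ.val.map f = m := by
  obtain ⟨l, rfl⟩ : ∃ l : List β, (l : Multiset β) = m := Quotient.exists_rep m
  rw [Multiset.coe_card] at h
  subst h
  exact ⟨l.get, by rw [Fin.univ_val_map, List.ofFn_get]⟩

theorem filter_ne_add_replicate_count {β : Type*} [DecidableEq β] (m : Multiset β) (a : β) :
    m.filter (· ≠ a) + Multiset.replicate (m.count a) a = m := by
  rw [← Multiset.filter_eq', ← Multiset.filter_add_not (· ≠ a) m]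
  simp

theorem eq_of_filter_ne_eq_of_card_eq {β : Type*} [DecidableEq β] {m m' : Multiset β} {a : β}
    (h : m.filter (· ≠ a) = m'.filter (· ≠ a)) (hc : Multiset.card m = Multiset.card m') :
    m = m' := by
  have hm := filter_ne_add_replicate_count m a
  have hm' := filter_ne_add_replicate_count m' a
  have hcount : m.count a = m'.count a := by
    have hcard := congrArg Multiset.card hm
    have hcard' := congrArg Multiset.card hm'
    rw [Multiset.card_add, Multiset.card_replicate, h] at hcard
    rw [Multiset.card_add, Multiset.card_replicate] at hcard'
    omega
  rw [← hm, ← hm', h, hcount]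

theorem sum_filter_ne_zero {M : Type*} [AddCommMonoid M] [DecidableEq M] (m : Multiset M) :
    (m.filter (· ≠ 0)).sum = m.sum := by
  conv_rhs => rw [← filter_ne_add_replicate_count m 0]
  simp

theorem isBiPar_iff {k : ℕ} {b : Multiset (ℕ × ℕ)} :
    IsBiPar k b ↔ 0 ∉ b ∧ b.sum = (k, k) := by
  rw [IsBiPar, Prod.mk_zero_zero, Prod.ext_iff, Multiset.fst_sum, Multiset.snd_sum]

theorem IsBiPar.card_le {k : ℕ} {b : Multiset (ℕ × ℕ)} (hb : IsBiPar k b) :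
    Multiset.card b ≤ 2 * k := by
  obtain ⟨hb0, hb1, hb2⟩ := hb
  have hpos : ∀ e ∈ b, 1 ≤ e.1 + e.2 := by
    rintro ⟨x, y⟩ he
    by_contra! hlt
    obtain ⟨rfl, rfl⟩ : x = 0 ∧ y = 0 := by omega
    exact hb0 he
  calc Multiset.card b = (b.map fun _ => 1).sum := by simp
    _ ≤ (b.map fun e => e.1 + e.2).sum := Multiset.sum_map_le_sum_map _ _ hpos
    _ = 2 * k := by rw [Multiset.sum_map_add, hb1, hb2, two_mul]

section SymPairs

variable {n k : ℕ}

def countPair (p : Sym (Fin n) k × Sym (Fin n) k) (i : Fin n) : ℕ × ℕ :=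
  ((p.1 : Multiset (Fin n)).count i, (p.2 : Multiset (Fin n)).count i)

theorem countPair_injective : Function.Injective (countPair (n := n) (k := k)) := by
  intro p q h
  have h1 i := congrArg Prod.fst (congrFun h i)
  have h2 i := congrArg Prod.snd (congrFun h i)
  exact Prod.ext (Sym.coe_injective (Multiset.ext.2 h1)) (Sym.coe_injective (Multiset.ext.2 h2))

theorem countPair_smul (σ : Perm (Fin n)) (p : Sym (Fin n) k × Sym (Fin n) k) :
    countPair (σ • p) = countPair p ∘ ⇑σ⁻¹ := by
  funext i
  have hcount (s : Sym (Fin n) k) : ((σ • s : Sym (Fin n) k) : Multiset (Fin n)).count i =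
      (s : Multiset (Fin n)).count (σ⁻¹ i) := by
    rw [← Multiset.count_map_eq_count' σ (s : Multiset (Fin n)) σ.injective, Perm.coe_inv,
      Equiv.apply_symm_apply]
    rfl
  exact Prod.ext (hcount p.1) (hcount p.2)

theorem sum_countPair (p : Sym (Fin n) k × Sym (Fin n) k) : ∑ i, countPair p i = (k, k) :=
  Prod.ext ((Prod.fst_sum ..).trans (Sym.equivNatSumOfFintype _ _ p.1).2)
    ((Prod.snd_sum ..).trans (Sym.equivNatSumOfFintype _ _ p.2).2)

theorem exists_countPair_eq {f : Fin n → ℕ × ℕ} (hf : ∑ i, f i = (k, k)) :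
    ∃ p : Sym (Fin n) k × Sym (Fin n) k, countPair p = f := by
  let e := Sym.equivNatSumOfFintype (Fin n) k
  refine ⟨(e.symm ⟨fun i => (f i).1, by rw [← Prod.fst_sum, hf]⟩,
    e.symm ⟨fun i => (f i).2, by rw [← Prod.snd_sum, hf]⟩), funext fun i => ?_⟩
  exact Prod.ext (congrFun (congrArg Subtype.val (e.apply_symm_apply _)) i)
    (congrFun (congrArg Subtype.val (e.apply_symm_apply _)) i)

def profile (p : Sym (Fin n) k × Sym (Fin n) k) : Multiset (ℕ × ℕ) :=
  (Finset.univ.val.map (countPair p)).filter (· ≠ 0)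

theorem profile_smul (σ : Perm (Fin n)) (p : Sym (Fin n) k × Sym (Fin n) k) :
    profile (σ • p) = profile p := by
  rw [profile, countPair_smul, ← Multiset.map_map, Multiset.map_univ_val_equiv, profile]

theorem profile_isBiPar (p : Sym (Fin n) k × Sym (Fin n) k) : IsBiPar k (profile p) :=
  isBiPar_iff.2 ⟨fun h => (Multiset.mem_filter.1 h).2 rfl,
    (sum_filter_ne_zero _).trans (sum_countPair p)⟩

theorem map_countPair_eq_of_profile_eq {p q : Sym (Fin n) k × Sym (Fin n) k}
    (h : profile p = profile q) :
    Finset.univ.val.map (countPair p) = Finset.univ.val.map (countPair q) :=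
  eq_of_filter_ne_eq_of_card_eq h (by simp)

theorem exists_profile_eq {b : Multiset (ℕ × ℕ)} (hb : IsBiPar k b) (hn : 2 * k ≤ n) :
    ∃ p : Sym (Fin n) k × Sym (Fin n) k, profile p = b := by
  obtain ⟨hb0, hsum⟩ := isBiPar_iff.1 hb
  obtain ⟨f, hf⟩ := exists_map_univ_eq_of_card_eq (n := n)
    (m := b + Multiset.replicate (n - Multiset.card b) 0)
    (by rw [Multiset.card_add, Multiset.card_replicate]; have := hb.card_le; omega)
  have hf_sum : ∑ i, f i = (k, k) := by
    rw [Finset.sum_eq_multiset_sum, hf, Multiset.sum_add, Multiset.sum_replicate, smul_zero,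
      add_zero, hsum]
  obtain ⟨p, hp⟩ := exists_countPair_eq hf_sum
  refine ⟨p, ?_⟩
  rw [profile, hp, hf, Multiset.filter_add,
    Multiset.filter_eq_self.2 fun e he => ne_of_mem_of_not_mem he hb0,
    Multiset.filter_eq_nil.2 fun e he => not_not.2 (Multiset.eq_of_mem_replicate he), add_zero]

variable (n k) in
noncomputable def orbitProfile :
    orbitRel.Quotient (Perm (Fin n)) (Sym (Fin n) k × Sym (Fin n) k) → {b // IsBiPar k b} :=
  Quotient.lift (fun p => ⟨profile p, profile_isBiPar p⟩) <| by
    rintro _ p ⟨σ, rfl⟩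
    exact Subtype.ext (profile_smul σ p)

theorem orbitProfile_injective : Function.Injective (orbitProfile n k) := by
  rintro ⟨p⟩ ⟨q⟩ h
  obtain ⟨σ, hσ⟩ := exists_perm_comp_eq_of_map_univ_eq
    (map_countPair_eq_of_profile_eq (congrArg Subtype.val h).symm)
  refine Quotient.sound ⟨σ⁻¹, countPair_injective ?_⟩
  rw [countPair_smul, inv_inv, hσ]

theorem orbitProfile_surjective (hn : 2 * k ≤ n) : Function.Surjective (orbitProfile n k) := by
  rintro ⟨b, hb⟩
  obtain ⟨p, hp⟩ := exists_profile_eq hb hn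
  exact ⟨Quotient.mk'' p, Subtype.ext hp⟩

theorem card_orbitRel_quotient_sym_prod (hn : 2 * k ≤ n) :
    Nat.card (orbitRel.Quotient (Perm (Fin n)) (Sym (Fin n) k × Sym (Fin n) k)) = bp k :=
  Nat.card_eq_of_bijective _ ⟨orbitProfile_injective, orbitProfile_surjective hn⟩

end SymPairs

theorem stmt7_general (n k : ℕ) (hn : 2 * k ≤ n) :
    Module.finrank ℂ (Rep.ofMulAction ℂ (Equiv.Perm (Fin n)) (Sym (Fin n) k) ⟶
      Rep.ofMulAction ℂ (Equiv.Perm (Fin n)) (Sym (Fin n) k)) = bp k := by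
  rw [(Rep.homLinearEquiv _ _).finrank_eq, finrank_intertwiningMap_ofMulAction,
    card_orbitRel_quotient_sym_prod hn]

/-- The dimension of the algebra of `ℂ[S_n]`-module endomorphisms of `Sym^k V_n`
(realized as the permutation representation on its monomial basis, indexed by size-`k`
multisets over `Fin n`) equals the number of bipartite partitions of `k`. -/
theorem stmt7 (n k : ℕ) (hk : 1 ≤ k) (hn : 2 * k ≤ n) :
    Module.finrank ℂ (Rep.ofMulAction ℂ (Equiv.Perm (Fin n)) (Sym (Fin n) k) ⟶
      Rep.ofMulAction ℂ (Equiv.Perm (Fin n)) (Sym (Fin n) k)) = bp k :=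
  stmt7_general n k hn

end SP
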